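/- Fix λ > 0, let A(x) := (√λ/π) sin(πx), and define the kernel T(x,y) := (A(x)A′(y) − A′(x)A(y))/(x − y) for x ≠ y and T(x,x) := λ. Let I ⊂ ℝ be a finite union of bounded open intervals, and suppose Q, P : ℝ → ℝ are continuous and R : ℝ × I → ℝ is continuous such that: (i) Q(x) = A(x) + ∫_I T(x,z) Q(z) dz for all x ∈ ℝ; (ii) P(x) = A′(x) + ∫_I T(x,z) P(z) dz for all x ∈ ℝ; (iii) R(x,y) = T(x,y) + ∫_I T(x,z) R(z,y) dz for all x ∈ ℝ, y ∈ I; (iv) R(x,y) = R(y,x) for all x, y ∈ I; and (v) the only continuous f : I → ℝ satisfying f(x) = ∫_I T(x,z) f(z) dz for all x ∈ I is f ≡ 0. Then for all x, y ∈ I with x ≠ y: R(x,y) = (Q(x)P(y) − P(x)Q(y))/(x − y); and for every x ∈ I, Q and P are differentiable at x and R(x,x) = Q′(x)P(x) − P′(x)Q(x). -/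

import Mathlib

/-!
The sine kernel is integrable in the sense of Its–Izergin–Korepin–Slavnov:
`(x - z) T(x,z) = A(x)A'(z) - A'(x)A(z)`. Multiply the resolvent equation for `R(·,y)` by
`x - y` and split `x - y = (x - z) + (z - y)` under the integral. Since `T` is symmetric,
`∫ A(z) R(z,y) dz = Q(y) - A(y)` and `∫ A'(z) R(z,y) dz = P(y) - A'(y)`, and these identities
make `(x - y) R(x,y) - (Q(x)P(y) - P(x)Q(y))` a fixed point of the integral operator. Uniqueness
then forces it to vanish. On the diagonal, `R(x,x)` is the limit of the resulting difference
quotient. `Q` and `P` are differentiable because `T(x,z) = λ sinc(π(x - z))`, and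
`sinc t = ∫₀¹ cos(ts) ds` has a bounded derivative.
-/

open Real MeasureTheory Filter Topology Set Bornology

namespace Real

lemma sinc_eq_integral_cos (t : ℝ) : sinc t = ∫ s in (0 : ℝ)..1, cos (t * s) := by
  rcases eq_or_ne t 0 with rfl | ht
  · simp
  · simp [sinc_of_ne_zero ht, intervalIntegral.integral_comp_mul_left (fun s => cos s) ht,
      div_eq_inv_mul]

lemma norm_mul_sin_le_one_of_mem_uIoc {s : ℝ} (hs : s ∈ uIoc 0 1) (u : ℝ) :
    ‖s * sin u‖ ≤ 1 := by
  rw [uIoc_of_le zero_le_one] at hs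
  rw [norm_mul, Real.norm_of_nonneg hs.1.le]
  exact mul_le_one₀ hs.2 (norm_nonneg _) (abs_sin_le_one _)

lemma hasDerivAt_sinc (t : ℝ) :
    HasDerivAt sinc (∫ s in (0 : ℝ)..1, -(s * sin (t * s))) t := by
  rw [show sinc = fun t => ∫ s in (0 : ℝ)..1, cos (t * s) from funext sinc_eq_integral_cos]
  refine (intervalIntegral.hasDerivAt_integral_of_dominated_loc_of_deriv_le
    (F := fun u s => cos (u * s)) (F' := fun u s => -(s * sin (u * s))) (bound := fun _ => 1)
    univ_mem (.of_forall fun u => by fun_prop)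
    ((by fun_prop : Continuous _).intervalIntegrable _ _) (by fun_prop)
    (.of_forall fun s hs u _ => by simpa using norm_mul_sin_le_one_of_mem_uIoc hs (u * s))
    intervalIntegrable_const (.of_forall fun s _ u _ => ?_)).2
  simpa [mul_comm] using ((hasDerivAt_mul_const s).cos)

lemma differentiable_sinc : Differentiable ℝ sinc := fun t => (hasDerivAt_sinc t).differentiableAt

lemma abs_deriv_sinc_le_one (t : ℝ) : |deriv sinc t| ≤ 1 := by
  rw [(hasDerivAt_sinc t).deriv]
  simpa using intervalIntegral.norm_integral_le_of_norm_le_const (a := 0) (b := 1) (C := 1)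
    (f := fun s => -(s * sin (t * s)))
    fun s hs => by simpa using norm_mul_sin_le_one_of_mem_uIoc hs (t * s)

lemma abs_deriv_const_mul_sinc_comp_mul_le (c a t : ℝ) :
    |deriv (fun t => c * sinc (a * t)) t| ≤ |c| * |a| := by
  have hd : DifferentiableAt ℝ (fun t => sinc (a * t)) t := by
    have := differentiable_sinc
    fun_prop
  rw [deriv_const_mul _ hd, deriv_comp_mul_left, smul_eq_mul, abs_mul, abs_mul]
  exact mul_le_mul_of_nonneg_left
    (mul_le_of_le_one_right (abs_nonneg a) (abs_deriv_sinc_le_one _)) (abs_nonneg c)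

end Real

theorem hasDerivAt_integral_comp_sub_mul {μ : Measure ℝ} {k G : ℝ → ℝ} {C K : ℝ}
    (hkd : Differentiable ℝ k) (hk : ∀ t, |k t| ≤ C) (hk' : ∀ t, |deriv k t| ≤ K)
    (hG : Integrable G μ) (x : ℝ) :
    HasDerivAt (fun x => ∫ z, k (x - z) * G z ∂μ) (∫ z, deriv k (x - z) * G z ∂μ) x := by
  have hkx : ∀ u, Continuous fun z => k (u - z) := fun u => by
    have := hkd.continuous; fun_prop
  refine (hasDerivAt_integral_of_dominated_loc_of_deriv_le (F' := fun u z => deriv k (u - z) * G z)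
    (bound := fun z => K * |G z|)
    univ_mem (.of_forall fun u => (hkx u).aestronglyMeasurable.mul hG.aestronglyMeasurable)
    (hG.bdd_mul (hkx x).aestronglyMeasurable (.of_forall fun z => hk _))
    (((measurable_deriv k).comp (measurable_const.sub measurable_id)).aestronglyMeasurable.mul
      hG.aestronglyMeasurable)
    (.of_forall fun z u _ => ?_) (hG.abs.const_mul K) (.of_forall fun z u _ => ?_)).2
  · rw [norm_mul]; exact mul_le_mul_of_nonneg_right (hk' _) (norm_nonneg _)
  · exact ((hkd _).hasDerivAt.comp_sub_const u z).mul_const (G z)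

theorem differentiable_of_eq_add_integral_comp_sub_mul {μ : Measure ℝ} {k B G : ℝ → ℝ}
    {C K : ℝ} (hkd : Differentiable ℝ k) (hk : ∀ t, |k t| ≤ C)
    (hk' : ∀ t, |deriv k t| ≤ K) (hB : Differentiable ℝ B) (hG : Integrable G μ)
    (hGeq : ∀ x, G x = B x + ∫ z, k (x - z) * G z ∂μ) : Differentiable ℝ G := fun x =>
  ((hB x).hasDerivAt.add (hasDerivAt_integral_comp_sub_mul hkd hk hk' hG x)).differentiableAt
    |>.congr_of_eventuallyEq (.of_forall hGeq)

theorem differentiable_of_eq_add_integral_sinc_mul {μ : Measure ℝ} {c a : ℝ}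
    {B G : ℝ → ℝ} (hB : Differentiable ℝ B) (hG : Integrable G μ)
    (hGeq : ∀ x, G x = B x + ∫ z, c * sinc (a * (x - z)) * G z ∂μ) : Differentiable ℝ G :=
  differentiable_of_eq_add_integral_comp_sub_mul (k := fun t => c * sinc (a * t))
    ((differentiable_sinc.comp (differentiable_id.const_mul a)).const_mul c)
    (fun t => by simpa [abs_mul] using mul_le_of_le_one_right (abs_nonneg c) (abs_sinc_le_one _))
    (abs_deriv_const_mul_sinc_comp_mul_le c a) hB hG hGeq

theorem Continuous.integrableOn_of_isBounded {X E : Type*} [MetricSpace X] [ProperSpace X]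
    [MeasurableSpace X] [OpensMeasurableSpace X] [NormedAddCommGroup E] {μ : Measure X}
    [IsLocallyFiniteMeasure μ] {f : X → E} (hf : Continuous f) {s : Set X} (hs : IsBounded s) :
    IntegrableOn f s μ :=
  (hf.continuousOn.integrableOn_compact hs.isCompact_closure).mono_set subset_closure

section IntegrableKernel

variable {I : Set ℝ} {T : ℝ → ℝ → ℝ}

theorem setIntegral_kernel_mul_eq_mul_kernel (hI : IsBounded I)
    (hT : Continuous fun p : ℝ × ℝ => T p.1 p.2) (hTsymm : ∀ x z, T x z = T z x)
    {f g : ℝ → ℝ} (hf : Continuous f) (hg : Continuous g) :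
    ∫ z in I, (∫ w in I, T z w * f w) * g z = ∫ w in I, f w * ∫ z in I, T w z * g z := by
  have hint : Integrable (fun p : ℝ × ℝ => T p.1 p.2 * f p.2 * g p.1)
      ((volume.restrict I).prod (volume.restrict I)) := by
    rw [Measure.prod_restrict, ← Measure.volume_eq_prod]
    exact Continuous.integrableOn_of_isBounded (by fun_prop) (hI.prod hI)
  calc ∫ z in I, (∫ w in I, T z w * f w) * g z = ∫ z in I, ∫ w in I, T z w * f w * g z := by
        simp_rw [integral_mul_const]
    _ = ∫ w in I, ∫ z in I, T z w * f w * g z := integral_integral_swap hint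
    _ = ∫ w in I, f w * ∫ z in I, T w z * g z := by
        simp_rw [← integral_const_mul]
        refine integral_congr_ae (.of_forall fun w => integral_congr_ae (.of_forall fun z => ?_))
        simp only [hTsymm z w]; ring

theorem setIntegral_mul_eq_of_resolvent (hI : IsBounded I) (hIm : MeasurableSet I)
    (hT : Continuous fun p : ℝ × ℝ => T p.1 p.2) (hTsymm : ∀ x z, T x z = T z x)
    {B G ρ : ℝ → ℝ} {y : ℝ} (hB : Continuous B) (hG : Continuous G) (hρ : Continuous ρ)
    (hGeq : ∀ x, G x = B x + ∫ z in I, T x z * G z)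
    (hρeq : ∀ w ∈ I, ρ w = T w y + ∫ z in I, T w z * ρ z) :
    ∫ z in I, B z * ρ z = G y - B y := by
  have hTG : ∀ x, ∫ z in I, T x z * G z = G x - B x := fun x => by linarith [hGeq x]
  have hTy : Continuous fun w => T w y := hT.comp (continuous_id.prodMk continuous_const)
  have hadj : ∫ z in I, (G z - B z) * ρ z = ∫ w in I, G w * (ρ w - T w y) := by
    have := setIntegral_kernel_mul_eq_mul_kernel hI hT hTsymm hG hρ
    simp_rw [hTG] at this
    rw [this]
    refine setIntegral_congr_fun hIm fun w hw => ?_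
    simp only [hρeq w hw]; ring
  simp_rw [sub_mul, mul_sub] at hadj
  have hint : ∀ g : ℝ → ℝ, Continuous g → IntegrableOn g I := fun g hg =>
    hg.integrableOn_of_isBounded hI
  rw [integral_sub (hint _ (by fun_prop)) (hint _ (by fun_prop)),
    integral_sub (hint _ (by fun_prop)) (hint _ (by fun_prop))] at hadj
  calc ∫ z in I, B z * ρ z = ∫ z in I, G z * T z y := by linarith
    _ = ∫ z in I, T y z * G z := by simp_rw [hTsymm _ y, mul_comm]
    _ = G y - B y := hTG y

theorem sub_mul_resolvent_sub_eq_integral (hI : IsBounded I) (hIm : MeasurableSet I)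
    (hT : Continuous fun p : ℝ × ℝ => T p.1 p.2) (hTsymm : ∀ x z, T x z = T z x)
    {A B Q P ρ : ℝ → ℝ} {y : ℝ} (hTAB : ∀ x z, (x - z) * T x z = A x * B z - B x * A z)
    (hA : Continuous A) (hB : Continuous B) (hQ : Continuous Q) (hP : Continuous P)
    (hρ : Continuous ρ) (hQeq : ∀ x, Q x = A x + ∫ z in I, T x z * Q z)
    (hPeq : ∀ x, P x = B x + ∫ z in I, T x z * P z)
    (hρeq : ∀ x, ρ x = T x y + ∫ z in I, T x z * ρ z) (x : ℝ) :
    (x - y) * ρ x - (Q x * P y - P x * Q y)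
      = ∫ z in I, T x z * ((z - y) * ρ z - (Q z * P y - P z * Q y)) := by
  have hTx : Continuous (T x) := hT.comp (continuous_const.prodMk continuous_id)
  have hint : ∀ g : ℝ → ℝ, Continuous g → IntegrableOn g I := fun g hg =>
    hg.integrableOn_of_isBounded hI
  have hAρ := setIntegral_mul_eq_of_resolvent hI hIm hT hTsymm hA hQ hρ hQeq fun w _ => hρeq w
  have hBρ := setIntegral_mul_eq_of_resolvent hI hIm hT hTsymm hB hP hρ hPeq fun w _ => hρeq w
  have hsplit : ∀ z, T x z * ((z - y) * ρ z - (Q z * P y - P z * Q y))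
      = (x - y) * (T x z * ρ z) - (A x * (B z * ρ z) - B x * (A z * ρ z))
        - P y * (T x z * Q z) + Q y * (T x z * P z) := fun z => by
    linear_combination (-ρ z) * hTAB x z
  simp_rw [hsplit]
  rw [integral_add (hint _ (by fun_prop)) (hint _ (by fun_prop)),
    integral_sub (hint _ (by fun_prop)) (hint _ (by fun_prop)),
    integral_sub (hint _ (by fun_prop)) (hint _ (by fun_prop)),
    integral_sub (hint _ (by fun_prop)) (hint _ (by fun_prop))]
  simp only [integral_const_mul, hAρ, hBρ]
  linear_combination (x - y) * hρeq x + hTAB x y - P y * hQeq x + Q y * hPeq x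

theorem resolvent_eq_div_sub_of_integrable_kernel (hI : IsBounded I) (hIm : MeasurableSet I)
    (hT : Continuous fun p : ℝ × ℝ => T p.1 p.2) (hTsymm : ∀ x z, T x z = T z x)
    {A B Q P : ℝ → ℝ} (hTAB : ∀ x z, (x - z) * T x z = A x * B z - B x * A z)
    (hA : Continuous A) (hB : Continuous B) (hQ : Continuous Q) (hP : Continuous P)
    (hQeq : ∀ x, Q x = A x + ∫ z in I, T x z * Q z)
    (hPeq : ∀ x, P x = B x + ∫ z in I, T x z * P z) {R : ℝ → ℝ → ℝ}
    (hR : ∀ y ∈ I, Continuous fun x => R x y)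
    (hReq : ∀ x, ∀ y ∈ I, R x y = T x y + ∫ z in I, T x z * R z y)
    (huniq : ∀ f : ℝ → ℝ, ContinuousOn f I →
      (∀ x ∈ I, f x = ∫ z in I, T x z * f z) → ∀ x ∈ I, f x = 0)
    {x y : ℝ} (hx : x ∈ I) (hy : y ∈ I) (hxy : x ≠ y) :
    R x y = (Q x * P y - P x * Q y) / (x - y) := by
  have hzero := huniq (fun x => (x - y) * R x y - (Q x * P y - P x * Q y))
    (by have := hR y hy; fun_prop)
    (fun x _ => sub_mul_resolvent_sub_eq_integral hI hIm hT hTsymm hTAB hA hB hQ hP (hR y hy)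
      hQeq hPeq (fun x => hReq x y hy) x) x hx
  rw [eq_div_iff (sub_ne_zero.mpr hxy)]
  linear_combination hzero

end IntegrableKernel

theorem sub_mul_eq_of_eq_ite_div {T N : ℝ → ℝ → ℝ} {c : ℝ} (hN : ∀ x, N x x = 0)
    (hT : ∀ x y, T x y = if x = y then c else N x y / (x - y)) (x y : ℝ) :
    (x - y) * T x y = N x y := by
  rw [hT]
  split_ifs with hxy
  · rw [hxy, hN, sub_self, zero_mul]
  · field_simp [sub_ne_zero.mpr hxy]

theorem eq_wronskian_of_tendsto_of_eq_div {Q P ρ : ℝ → ℝ} {x q p r : ℝ}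
    (hQ : HasDerivAt Q q x) (hP : HasDerivAt P p x) (hρ : Tendsto ρ (𝓝[≠] x) (𝓝 r))
    (hρeq : ∀ᶠ y in 𝓝[≠] x, ρ y = (Q x * P y - P x * Q y) / (x - y)) :
    r = q * P x - p * Q x := by
  have hslope : Tendsto (fun y => P x * slope Q x y - Q x * slope P x y) (𝓝[≠] x)
      (𝓝 (P x * q - Q x * p)) :=
    ((hasDerivAt_iff_tendsto_slope.mp hQ).const_mul _).sub
      ((hasDerivAt_iff_tendsto_slope.mp hP).const_mul _)
  have hρslope : ρ =ᶠ[𝓝[≠] x] fun y => P x * slope Q x y - Q x * slope P x y := by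
    filter_upwards [hρeq, self_mem_nhdsWithin] with y hy hyx
    rw [hy, slope_def_field, slope_def_field]
    field_simp [sub_ne_zero.mpr hyx, sub_ne_zero.mpr (Ne.symm hyx)]
    ring
  rw [tendsto_nhds_unique hρ (hslope.congr' hρslope.symm)]
  ring

theorem sineKernel_eq_mul_sinc {lam : ℝ} (hlam : 0 ≤ lam) {A A' : ℝ → ℝ}
    {T : ℝ → ℝ → ℝ} (hA : ∀ x, A x = (Real.sqrt lam / π) * Real.sin (π * x))
    (hA' : ∀ x, A' x = Real.sqrt lam * Real.cos (π * x))
    (hT : ∀ x y, T x y = if x = y then lam else (A x * A' y - A' x * A y) / (x - y)) (x z : ℝ) :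
    T x z = lam * sinc (π * (x - z)) := by
  rcases eq_or_ne x z with rfl | hxz
  · simp [hT]
  · have hxz' : x - z ≠ 0 := sub_ne_zero.mpr hxz
    rw [hT, if_neg hxz, hA, hA', hA, hA', sinc_of_ne_zero (mul_ne_zero pi_ne_zero hxz'), mul_sub,
      sin_sub]
    field_simp
    rw [sq_sqrt hlam]
    ring

theorem resolvent_kernel_structure
    (lam : ℝ) (hlam : 0 < lam)
    (A A' : ℝ → ℝ)
    (hA : ∀ x, A x = (Real.sqrt lam / π) * Real.sin (π * x))
    (hA' : ∀ x, A' x = Real.sqrt lam * Real.cos (π * x))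
    (T : ℝ → ℝ → ℝ)
    (hT : ∀ x y, T x y = if x = y then lam else (A x * A' y - A' x * A y) / (x - y))
    (I : Set ℝ)
    (hI : ∃ (mI : ℕ) (a b : Fin mI → ℝ), I = ⋃ i, Set.Ioo (a i) (b i))
    (Q P : ℝ → ℝ) (hQcont : Continuous Q) (hPcont : Continuous P)
    (R : ℝ → ℝ → ℝ)
    (hRcont : ContinuousOn (fun q : ℝ × ℝ => R q.1 q.2) (Set.univ ×ˢ I))
    (hQ : ∀ x, Q x = A x + ∫ z in I, T x z * Q z)
    (hP : ∀ x, P x = A' x + ∫ z in I, T x z * P z)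
    (hR : ∀ x, ∀ y ∈ I, R x y = T x y + ∫ z in I, T x z * R z y)
    (huniq : ∀ f : ℝ → ℝ, ContinuousOn f I →
      (∀ x ∈ I, f x = ∫ z in I, T x z * f z) → ∀ x ∈ I, f x = 0) :
    (∀ x ∈ I, ∀ y ∈ I, x ≠ y →
        R x y = (Q x * P y - P x * Q y) / (x - y)) ∧
    (∀ x ∈ I, ∃ q' p' : ℝ, HasDerivAt Q q' x ∧ HasDerivAt P p' x ∧
        R x x = q' * P x - p' * Q x) := by
  obtain ⟨mI, a, b, hIab⟩ := hI
  have hIo : IsOpen I := hIab ▸ isOpen_iUnion fun _ => isOpen_Ioo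
  have hIb : IsBounded I := hIab ▸ isBounded_iUnion.2 fun _ => Metric.isBounded_Ioo _ _
  have hTk := sineKernel_eq_mul_sinc hlam.le hA hA' hT
  have hTc : Continuous fun p : ℝ × ℝ => T p.1 p.2 := by simp_rw [hTk]; fun_prop
  have hTsymm : ∀ x z, T x z = T z x := fun x z => by
    rw [hTk, hTk, ← neg_sub z x, mul_neg, sinc_neg]
  have hAd : Differentiable ℝ A := by rw [funext hA]; fun_prop
  have hA'd : Differentiable ℝ A' := by rw [funext hA']; fun_prop
  have hRat : ∀ x, ∀ y ∈ I, ContinuousAt (fun q : ℝ × ℝ => R q.1 q.2) (x, y) :=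
    fun x y hy => hRcont.continuousAt (prod_mem_nhds univ_mem (hIo.mem_nhds hy))
  have hoff : ∀ x ∈ I, ∀ y ∈ I, x ≠ y → R x y = (Q x * P y - P x * Q y) / (x - y) :=
    fun x hx y hy hxy => resolvent_eq_div_sub_of_integrable_kernel hIb hIo.measurableSet hTc
      hTsymm (sub_mul_eq_of_eq_ite_div (fun x => by ring) hT) hAd.continuous hA'd.continuous
      hQcont hPcont hQ hP (fun y hy => continuous_iff_continuousAt.2 fun z =>
        (hRat z y hy).comp (f := fun w => (w, y)) (by fun_prop)) hR huniq hx hy hxy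
  have hQd : Differentiable ℝ Q := differentiable_of_eq_add_integral_sinc_mul hAd
    (hQcont.integrableOn_of_isBounded hIb) (by simpa only [hTk] using hQ)
  have hPd : Differentiable ℝ P := differentiable_of_eq_add_integral_sinc_mul hA'd
    (hPcont.integrableOn_of_isBounded hIb) (by simpa only [hTk] using hP)
  refine ⟨hoff, fun x hx => ⟨_, _, (hQd x).hasDerivAt, (hPd x).hasDerivAt, ?_⟩⟩
  refine eq_wronskian_of_tendsto_of_eq_div (hQd x).hasDerivAt (hPd x).hasDerivAt
    (((hRat x x hx).comp (f := fun w => (x, w)) (by fun_prop)).tendsto.mono_left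
      nhdsWithin_le_nhds) ?_
  filter_upwards [mem_nhdsWithin_of_mem_nhds (hIo.mem_nhds hx), self_mem_nhdsWithin]
    with y hy hyx using hoff x hx y hy (Ne.symm hyx)
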